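/- arXiv:2507.11186 — 5 statements merged into one kernel-verified Lean document; each statement's English description precedes it below -/
import Mathlib

section
/- Let V be a real vector space with x +_p y := p·x + (1-p)·y, and let ⊕ be a binary operation on V making ⟨V, +_p, ⊕⟩ a convex semilattice. Then q·x ⊕ q·y = q·(x ⊕ y) for all x, y ∈ V and all real q > 0. -/
/-- In a convex semilattice structure on a real vector space, the semilattice operation
commutes with multiplication by positive scalars. -/
theorem convex_semilattice_smul_distrib
    (V : Type*) [AddCommGroup V] [Module ℝ V]
    (o : V → V → V)
    (hidem : ∀ x : V, o x x = x)
    (hcomm : ∀ x y : V, o x y = o y x)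
    (hassoc : ∀ x y z : V, o x (o y z) = o (o x y) z)
    (hdist : ∀ x y z : V, ∀ p ∈ Set.Ioo (0 : ℝ) 1,
      p • o x y + (1 - p) • z = o (p • x + (1 - p) • z) (p • y + (1 - p) • z)) :
    ∀ (x y : V) (q : ℝ), 0 < q → o (q • x) (q • y) = q • o x y := by
  have key : ∀ (x y : V) (p : ℝ), p ∈ Set.Ioo (0 : ℝ) 1 → o (p • x) (p • y) = p • o x y := by
    intro x y p hp
    have := hdist x y 0 p hp
    simpa using this.symm
  intro x y q hq
  rcases lt_trichotomy q 1 with h | h | h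
  · exact key x y q ⟨hq, h⟩
  · simp [h]
  · have hp : (1/q) ∈ Set.Ioo (0 : ℝ) 1 := ⟨by positivity, by
      rw [div_lt_one (by linarith)]; linarith⟩
    have := key (q • x) (q • y) (1/q) hp
    rw [smul_smul, smul_smul, one_div, inv_mul_cancel₀ (by linarith)] at this
    have h2 := congrArg (fun v => q • v) this
    simp only [smul_smul, mul_inv_cancel₀ (show q ≠ 0 by linarith), one_smul] at h2
    exact h2.symm
end

section
/- Let V be a real vector space with x +_p y := p·x + (1-p)·y, and ⊕ a binary operation on V making ⟨V, +_p, ⊕⟩ a convex semilattice. Define x ≤ y iff x ⊕ y = y. Then ≤ is translation-invariant: for all x, y, z ∈ V, x ≤ y implies x + z ≤ y + z. -/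
/-- The order induced by a convex semilattice structure on a real vector space is
translation-invariant. -/
theorem convex_semilattice_order_translation_invariant
    (V : Type*) [AddCommGroup V] [Module ℝ V]
    (o : V → V → V)
    (hidem : ∀ x : V, o x x = x)
    (hcomm : ∀ x y : V, o x y = o y x)
    (hassoc : ∀ x y z : V, o x (o y z) = o (o x y) z)
    (hdist : ∀ x y z : V, ∀ p ∈ Set.Ioo (0 : ℝ) 1,
      p • o x y + (1 - p) • z = o (p • x + (1 - p) • z) (p • y + (1 - p) • z)) :
    ∀ x y z : V, o x y = y → o (x + z) (y + z) = y + z := by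
  intro x y z hxy
  have hmem : (1/2 : ℝ) ∈ Set.Ioo (0 : ℝ) 1 := by norm_num
  have hs : ∀ v : V, (1/2 : ℝ) • ((2:ℝ) • v) = v := by
    intro v; rw [smul_smul]; norm_num
  -- homogeneity: (1/2) • o (2x) (2y) = o x y = y
  have h0 := hdist ((2:ℝ) • x) ((2:ℝ) • y) 0 (1/2) hmem
  simp only [smul_zero, add_zero, hs] at h0
  rw [hxy] at h0
  -- translation: apply distributivity with doubled arguments
  have h1 := hdist ((2:ℝ) • x) ((2:ℝ) • y) ((2:ℝ) • z) (1/2) hmem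
  have h12 : (1 - 1/2 : ℝ) = 1/2 := by norm_num
  rw [h12, hs, hs, hs, h0] at h1
  exact h1.symm
end

section
/- Let V be a real vector space with x +_p y := p·x + (1-p)·y, and ⊕ a binary operation on V making ⟨V, +_p, ⊕⟩ a convex semilattice. Then V with the order x ≤ y iff x ⊕ y = y is a Riesz space: an ordered vector space in which every pair of elements has a supremum (namely x ⊕ y) and an infimum (namely -((-x) ⊕ (-y))). -/
/-- A convex semilattice structure on a real vector space makes it a Riesz space for the
induced order `x ≤ y ↔ x ⊕ y = y`: the order is a translation-invariant,
positively-scaling-invariant partial order, `x ⊕ y` is the supremum of `x` and `y`,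
and `-((-x) ⊕ (-y))` is their infimum. -/
theorem convex_semilattice_gives_riesz_space
    (V : Type*) [AddCommGroup V] [Module ℝ V]
    (o : V → V → V)
    (hidem : ∀ x : V, o x x = x)
    (hcomm : ∀ x y : V, o x y = o y x)
    (hassoc : ∀ x y z : V, o x (o y z) = o (o x y) z)
    (hdist : ∀ x y z : V, ∀ p ∈ Set.Ioo (0 : ℝ) 1,
      p • o x y + (1 - p) • z = o (p • x + (1 - p) • z) (p • y + (1 - p) • z))
    (le : V → V → Prop) (hle : ∀ x y, le x y ↔ o x y = y) :
    -- partial order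
    (∀ x, le x x) ∧
    (∀ x y, le x y → le y x → x = y) ∧
    (∀ x y z, le x y → le y z → le x z) ∧
    -- translation invariance
    (∀ x y z, le x y → le (x + z) (y + z)) ∧
    -- invariance under positive scalars
    (∀ (q : ℝ) (x : V), 0 < q → le 0 x → le 0 (q • x)) ∧
    -- `o x y` is the supremum of `x` and `y`
    (∀ x y, le x (o x y) ∧ le y (o x y) ∧ ∀ z, le x z → le y z → le (o x y) z) ∧
    -- `-((-x) ⊕ (-y))` is the infimum of `x` and `y`
    (∀ x y, le (-(o (-x) (-y))) x ∧ le (-(o (-x) (-y))) y ∧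
      ∀ z, le z x → le z y → le z (-(o (-x) (-y)))) := by
  -- homogeneity for p ∈ (0,1)
  have hhom0 : ∀ p ∈ Set.Ioo (0:ℝ) 1, ∀ x y : V, o (p • x) (p • y) = p • o x y := by
    intro p hp x y
    have := hdist x y 0 p hp
    simpa using this.symm
  -- homogeneity for all q > 0
  have hhom : ∀ q : ℝ, 0 < q → ∀ x y : V, o (q • x) (q • y) = q • o x y := by
    intro q hq x y
    rcases lt_trichotomy q 1 with h | h | h
    · exact hhom0 q ⟨hq, h⟩ x y
    · simp [h]
    · have hq' : (1/q : ℝ) ∈ Set.Ioo (0:ℝ) 1 := by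
        constructor
        · positivity
        · rw [div_lt_one (by linarith)]; linarith
      have := hhom0 (1/q) hq' (q • x) (q • y)
      rw [smul_smul, smul_smul, one_div, inv_mul_cancel₀ (by linarith), one_smul,
        one_smul] at this
      rw [this, smul_smul, mul_inv_cancel₀ (by linarith : q ≠ 0), one_smul]
  -- translation invariance of o
  have htr : ∀ x y z : V, o (x + z) (y + z) = o x y + z := by
    intro x y z
    have h2 : ((1:ℝ)/2) ∈ Set.Ioo (0:ℝ) 1 := by norm_num
    have := hdist ((2:ℝ) • x) ((2:ℝ) • y) ((2:ℝ) • z) (1/2) h2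
    have e : ∀ v : V, ((1:ℝ)/2) • ((2:ℝ) • v) = v := by
      intro v; rw [smul_smul]; norm_num
    rw [hhom 2 (by norm_num) x y] at this
    have e2 : (1 - (1:ℝ)/2) = (1:ℝ)/2 := by norm_num
    rw [e2, e, e, e] at this
    rw [smul_smul] at this
    norm_num at this
    exact this.symm
  have hneg : ∀ x y : V, o (-y) (-x) = o x y - x - y := by
    intro x y
    have := htr (-y) (-x) (x + y)
    have h1 : -y + (x + y) = x := by abel
    have h2 : -x + (x + y) = y := by abel
    rw [h1, h2] at this
    rw [this]; abel
  have hlneg : ∀ x y : V, le x y ↔ le (-y) (-x) := by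
    intro x y
    rw [hle, hle, hneg]
    constructor
    · intro h; rw [h]; abel
    · intro h
      have : o x y - x - y + (x + y) = -x + (x + y) := by rw [h]
      simpa using this
  have hsup : ∀ x y, le x (o x y) ∧ le y (o x y) ∧
      ∀ z, le x z → le y z → le (o x y) z := by
    intro x y
    refine ⟨?_, ?_, ?_⟩
    · rw [hle, hassoc, hidem]
    · rw [hle, hcomm, ← hassoc, hidem]
    · intro z hx hy
      rw [hle] at hx hy ⊢
      rw [← hassoc, hy, hx]
  refine ⟨?_, ?_, ?_, ?_, ?_, hsup, ?_⟩
  · intro x; rw [hle]; exact hidem x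
  · intro x y h1 h2
    rw [hle] at h1 h2
    rw [← h1, hcomm, h2]
  · intro x y z h1 h2
    rw [hle] at h1 h2 ⊢
    rw [← h2, hassoc, h1]
  · intro x y z h
    rw [hle] at h ⊢
    rw [htr, h]
  · intro q x hq h
    rw [hle] at h ⊢
    have := hhom q hq 0 x
    rw [smul_zero, h] at this
    exact this
  · intro x y
    refine ⟨?_, ?_, ?_⟩
    · rw [hlneg]
      simpa using (hsup (-x) (-y)).1
    · rw [hlneg]
      simpa using (hsup (-x) (-y)).2.1
    · intro z h1 h2
      rw [hlneg] at h1 h2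
      rw [hlneg]
      simp only [neg_neg] at h1 h2 ⊢
      exact (hsup (-x) (-y)).2.2 (-z) h1 h2
end

section
/- Let V be a real vector space, X ⊆ V a convex subset containing 0, and define W := {x ∈ V : ∃ c ∈ X, p ∈ (0,1], P(c,p,x) ∈ X} where P(c,p,x) = p·x + (1-p)·c. Then W is a linear subspace of V containing X. -/
/-!
`W` is the convex cone generated by the convex set `X - X`. Since `X - X` is symmetric, so is
this cone, and a symmetric convex cone containing `0` is a subspace.
-/

open Pointwise

section

open Set

variable {𝕜 M : Type*} [Field 𝕜] [LinearOrder 𝕜] [IsStrictOrderedRing 𝕜]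
  [AddCommGroup M] [Module 𝕜 M]

def ConvexCone.toSubmodule (C : ConvexCone 𝕜 M) (hC : C.Pointed) (hneg : ∀ x ∈ C, -x ∈ C) :
    Submodule 𝕜 M where
  carrier := C
  add_mem' ha hb := C.add_mem ha hb
  zero_mem' := hC
  smul_mem' c x hx := by
    rcases lt_trichotomy c 0 with hc | rfl | hc
    · simpa using C.smul_mem (neg_pos.2 hc) (hneg x hx)
    · rw [zero_smul]; exact hC
    · exact C.smul_mem hc hx

theorem ConvexCone.neg_mem_hull_of_convex {s : Set M} (hs : Convex 𝕜 s)
    (hneg : ∀ x ∈ s, -x ∈ s) {x : M} (hx : x ∈ ConvexCone.hull 𝕜 s) : -x ∈ ConvexCone.hull 𝕜 s := by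
  obtain ⟨r, hr, y, hy, rfl⟩ := (ConvexCone.mem_hull_of_convex hs).1 hx
  exact (ConvexCone.mem_hull_of_convex hs).2 ⟨r, hr, -y, hneg y hy, smul_neg r y⟩

theorem Set.neg_mem_sub_self {s : Set M} {x : M} (hx : x ∈ s - s) : -x ∈ s - s := by
  obtain ⟨a, ha, b, hb, rfl⟩ := hx
  exact ⟨b, hb, a, ha, (neg_sub a b).symm⟩

theorem Convex.exists_smul_add_smul_mem_iff_mem_smul_sub {X : Set M} (hX : Convex 𝕜 X)
    (h0 : (0 : M) ∈ X) (x : M) :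
    (∃ c ∈ X, ∃ p ∈ Ioc (0 : 𝕜) 1, p • x + (1 - p) • c ∈ X) ↔
      ∃ r : 𝕜, 0 < r ∧ x ∈ r • (X - X) := by
  constructor
  · rintro ⟨c, hc, p, ⟨hp0, hp1⟩, hmem⟩
    have hc' : (1 - p) • c ∈ X := hX.smul_mem_of_zero_mem h0 hc ⟨by linarith, by linarith⟩
    refine ⟨p⁻¹, inv_pos.2 hp0, _, ⟨_, hmem, _, hc', rfl⟩, ?_⟩
    simp only [add_sub_cancel_right, smul_smul, inv_mul_cancel₀ hp0.ne', one_smul]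
  · rintro ⟨r, hr, _, ⟨a, ha, b, hb, rfl⟩, rfl⟩
    have h1r : 0 < 1 + r := by linarith
    refine ⟨b, hb, (1 + r)⁻¹, ⟨inv_pos.2 h1r, inv_le_one_of_one_le₀ (by linarith)⟩, ?_⟩
    -- with `p = 1/(1+r)` the `b`-terms cancel, leaving `(r/(1+r)) • a`
    have hp : 1 - (1 + r)⁻¹ = (1 + r)⁻¹ * r := by field_simp; ring
    have key :
        (1 + r)⁻¹ • r • (a - b) + (1 - (1 + r)⁻¹) • b = (1 - (1 + r)⁻¹) • a := by
      rw [hp, smul_smul, smul_sub]; abel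
    rw [key]
    exact hX.smul_mem_of_zero_mem h0 ha ⟨by rw [hp]; positivity, by linarith [inv_pos.2 h1r]⟩

end

theorem W_is_subspace_general
    (V : Type*) [AddCommGroup V] [Module ℝ V] (X : Set V)
    (hX : ∀ x ∈ X, ∀ y ∈ X, ∀ p ∈ Set.Ioo (0 : ℝ) 1, p • x + (1 - p) • y ∈ X)
    (h0 : (0 : V) ∈ X)
    (W : Set V)
    (hW : W = {x : V | ∃ c ∈ X, ∃ p ∈ Set.Ioc (0 : ℝ) 1, p • x + (1 - p) • c ∈ X}) :
    ∃ W' : Submodule ℝ V, (W' : Set V) = W ∧ X ⊆ W := by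
  have hconv : Convex ℝ X := convex_iff_forall_pos.2 fun x hx y hy a b ha _ hab => by
    obtain rfl : b = 1 - a := by linarith
    exact hX x hx y hy a ⟨ha, by linarith⟩
  have hdiff : Convex ℝ (X - X) := hconv.sub hconv
  have hpointed : (ConvexCone.hull ℝ (X - X)).Pointed :=
    ConvexCone.subset_hull (by simpa using Set.sub_mem_sub h0 h0)
  have hW_eq : W = ConvexCone.hull ℝ (X - X) := by
    ext x
    rw [hW, Set.mem_ofPred_eq, hconv.exists_smul_add_smul_mem_iff_mem_smul_sub h0, SetLike.mem_coe,
      ConvexCone.mem_hull_of_convex hdiff]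
  refine ⟨(ConvexCone.hull ℝ (X - X)).toSubmodule hpointed
    fun x => ConvexCone.neg_mem_hull_of_convex hdiff fun _ => Set.neg_mem_sub_self, hW_eq.symm, ?_⟩
  intro x hx
  rw [hW_eq]
  exact ConvexCone.subset_hull ⟨x, hx, 0, h0, sub_zero x⟩

/-- The set `W = {x : ∃ c ∈ X, p ∈ (0,1], P(c,p,x) ∈ X}` is a linear subspace
containing `X`, for `X` convex with `0 ∈ X` carrying a convex semilattice structure. -/
theorem W_is_subspace
    (V : Type*) [AddCommGroup V] [Module ℝ V] (X : Set V)
    (hX : ∀ x ∈ X, ∀ y ∈ X, ∀ p ∈ Set.Ioo (0 : ℝ) 1, p • x + (1 - p) • y ∈ X)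
    (h0 : (0 : V) ∈ X)
    (o : V → V → V)
    (hoX : ∀ x ∈ X, ∀ y ∈ X, o x y ∈ X)
    (hidem : ∀ x ∈ X, o x x = x)
    (hcomm : ∀ x ∈ X, ∀ y ∈ X, o x y = o y x)
    (hassoc : ∀ x ∈ X, ∀ y ∈ X, ∀ z ∈ X, o x (o y z) = o (o x y) z)
    (hdist : ∀ x ∈ X, ∀ y ∈ X, ∀ z ∈ X, ∀ p ∈ Set.Ioo (0 : ℝ) 1,
      p • o x y + (1 - p) • z = o (p • x + (1 - p) • z) (p • y + (1 - p) • z))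
    (W : Set V)
    (hW : W = {x : V | ∃ c ∈ X, ∃ p ∈ Set.Ioc (0 : ℝ) 1, p • x + (1 - p) • c ∈ X}) :
    ∃ W' : Submodule ℝ V, (W' : Set V) = W ∧ X ⊆ W :=
  W_is_subspace_general V X hX h0 W hW
end

section
/- Let V be a real vector space, X ⊆ V a convex subset with 0 ∈ X, and ⊕ a binary operation on X making ⟨X, +_p, ⊕⟩ a convex semilattice (with +_p inherited from V). Then there exists a linear subspace W of V with X ⊆ W and a binary operation ⊞ on W such that ⟨W, +_p, ⊞⟩ is a convex semilattice and ⊞ restricted to X × X equals ⊕. -/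
/-!
Since `0 ∈ X`, distributivity with `z = 0` makes `⊕` positively homogeneous on `X`, so
`(s • a) ⊕ (s • b) := s • (a ⊕ b)` (`s > 0`, `a, b ∈ X`) is a well-defined extension of `⊕` to the
cone `C = ℝ_{>0} • X`, again a convex semilattice. Distributivity on `C` with `p = 1/2` gives
translation invariance, `(u + z) ⊕ (v + z) = u ⊕ v + z` for `u, v, z ∈ C`. Every finite family in
`span X = C - C` is moved into `C` by adding one `z ∈ C`, so `w₁ ⊞ w₂ := (w₁ + z) ⊕ (w₂ + z) - z`
is well defined on `span X`, and each law for `⊞` is the same law for `⊕` on `C`.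
-/

namespace ConvexSemilatticeExtension

open ConvexCone Submodule Pointwise

variable {V : Type*} [AddCommGroup V] [Module ℝ V] {X : Set V} {o : V → V → V}

theorem exists_add_mem_of_mem_span {C : ConvexCone ℝ V} (hC : (C : Set V).Nonempty) {w : V}
    (hw : w ∈ span ℝ (C : Set V)) : ∃ z ∈ C, w + z ∈ C := by
  obtain ⟨c, hc⟩ := hC
  induction hw using Submodule.span_induction with
  | mem x hx => exact ⟨c, hc, C.add_mem hx hc⟩
  | zero => exact ⟨c, hc, by rwa [zero_add]⟩
  | add x y _ _ hx hy =>
    obtain ⟨z₁, hz₁, h₁⟩ := hx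
    obtain ⟨z₂, hz₂, h₂⟩ := hy
    exact ⟨z₁ + z₂, C.add_mem hz₁ hz₂, by rw [add_add_add_comm]; exact C.add_mem h₁ h₂⟩
  | smul r x _ hx =>
    obtain ⟨z, hz, h⟩ := hx
    rcases lt_trichotomy r 0 with hr | rfl | hr
    · refine ⟨(-r) • (x + z), C.smul_mem (neg_pos.2 hr) h, ?_⟩
      have e : r • x + (-r) • (x + z) = (-r) • z := by module
      rw [e]
      exact C.smul_mem (neg_pos.2 hr) hz
    · exact ⟨c, hc, by rwa [zero_smul, zero_add]⟩
    · exact ⟨r • z, C.smul_mem hr hz, by rw [← smul_add]; exact C.smul_mem hr h⟩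

theorem hull_subset_span : (hull ℝ X : Set V) ⊆ span ℝ X :=
  hull_min (C := (span ℝ X).toConvexCone) subset_span

open Classical in
noncomputable def coneOp (X : Set V) (o : V → V → V) (u v : V) : V :=
  if h : ∃ s : ℝ, 0 < s ∧ s⁻¹ • u ∈ X ∧ s⁻¹ • v ∈ X then
    h.choose • o (h.choose⁻¹ • u) (h.choose⁻¹ • v)
  else 0

open Classical in
noncomputable def spanOp (X : Set V) (o : V → V → V) (w₁ w₂ : V) : V :=
  if h : ∃ z ∈ hull ℝ X, w₁ + z ∈ hull ℝ X ∧ w₂ + z ∈ hull ℝ X then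
    coneOp X o (w₁ + h.choose) (w₂ + h.choose) - h.choose
  else 0

section Extension

variable (hX : Convex ℝ X) (h0 : (0 : V) ∈ X)
variable (hhom : ∀ x ∈ X, ∀ y ∈ X, ∀ p ∈ Set.Ioc (0 : ℝ) 1, o (p • x) (p • y) = p • o x y)
variable (hdist : ∀ x ∈ X, ∀ y ∈ X, ∀ z ∈ X, ∀ p ∈ Set.Ioo (0 : ℝ) 1,
      p • o x y + (1 - p) • z = o (p • x + (1 - p) • z) (p • y + (1 - p) • z))

include h0 in
theorem exists_add_mem_hull₃ {w₁ w₂ w₃ : V} (h₁ : w₁ ∈ span ℝ X) (h₂ : w₂ ∈ span ℝ X)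
    (h₃ : w₃ ∈ span ℝ X) :
    ∃ z ∈ hull ℝ X, w₁ + z ∈ hull ℝ X ∧ w₂ + z ∈ hull ℝ X ∧ w₃ + z ∈ hull ℝ X := by
  have hC : ((hull ℝ X : ConvexCone ℝ V) : Set V).Nonempty := ⟨0, subset_hull h0⟩
  have hspan : span ℝ X ≤ span ℝ (hull ℝ X : Set V) := span_mono subset_hull
  obtain ⟨z₁, hz₁, g₁⟩ := exists_add_mem_of_mem_span hC (hspan h₁)
  obtain ⟨z₂, hz₂, g₂⟩ := exists_add_mem_of_mem_span hC (hspan h₂)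
  obtain ⟨z₃, hz₃, g₃⟩ := exists_add_mem_of_mem_span hC (hspan h₃)
  refine ⟨z₁ + z₂ + z₃, add_mem (add_mem hz₁ hz₂) hz₃, ?_, ?_, ?_⟩
  · convert add_mem g₁ (add_mem hz₂ hz₃) using 1; abel
  · convert add_mem g₂ (add_mem hz₁ hz₃) using 1; abel
  · convert add_mem g₃ (add_mem hz₁ hz₂) using 1; abel

include hX h0 in
theorem mem_smul_set_of_le {u : V} {s t : ℝ} (hs : 0 < s) (hst : s ≤ t) (hu : u ∈ s • X) :
    u ∈ t • X := by
  obtain ⟨a, ha, rfl⟩ := hu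
  have ht : 0 < t := hs.trans_le hst
  refine ⟨(s / t) • a, hX.smul_mem_of_zero_mem h0 ha ⟨by positivity, div_le_one_of_le₀ hst ht.le⟩,
    ?_⟩
  dsimp only
  rw [smul_smul, mul_div_cancel₀ _ ht.ne']

include hX h0 in
theorem exists_mem_smul_set₃ {u v w : V} (hu : u ∈ hull ℝ X) (hv : v ∈ hull ℝ X)
    (hw : w ∈ hull ℝ X) :
    ∃ s : ℝ, 0 < s ∧ u ∈ s • X ∧ v ∈ s • X ∧ w ∈ s • X := by
  obtain ⟨r₁, hr₁, h₁⟩ := (mem_hull_of_convex hX).1 hu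
  obtain ⟨r₂, hr₂, h₂⟩ := (mem_hull_of_convex hX).1 hv
  obtain ⟨r₃, hr₃, h₃⟩ := (mem_hull_of_convex hX).1 hw
  refine ⟨max (max r₁ r₂) r₃, by positivity, mem_smul_set_of_le hX h0 hr₁ ?_ h₁,
    mem_smul_set_of_le hX h0 hr₂ ?_ h₂, mem_smul_set_of_le hX h0 hr₃ (le_max_right _ _) h₃⟩
  · exact le_max_of_le_left (le_max_left _ _)
  · exact le_max_of_le_left (le_max_right _ _)

include h0 hdist in
theorem op_smul_smul_of_dist :
    ∀ x ∈ X, ∀ y ∈ X, ∀ p ∈ Set.Ioc (0 : ℝ) 1, o (p • x) (p • y) = p • o x y := by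
  intro x hx y hy p hp
  rcases hp.2.lt_or_eq with hp1 | rfl
  · simpa using (hdist x hx y hy 0 h0 p ⟨hp.1, hp1⟩).symm
  · simp only [one_smul]

include hhom in
theorem smul_op_eq_of_smul_eq {s t : ℝ} (hs : 0 < s) (ht : 0 < t) {a b a' b' : V} (ha : a ∈ X)
    (hb : b ∈ X) (ha' : a' ∈ X) (hb' : b' ∈ X) (hsa : s • a = t • a') (hsb : s • b = t • b') :
    s • o a b = t • o a' b' := by
  wlog hst : s ≤ t generalizing s t a b a' b'
  · exact (this ht hs ha' hb' ha hb hsa.symm hsb.symm (le_of_not_ge hst)).symm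
  have hscale {c c' : V} (h : s • c = t • c') : c' = (s / t) • c := by
    rw [div_eq_inv_mul, ← smul_smul, h, inv_smul_smul₀ ht.ne']
  rw [hscale hsa, hscale hsb, hhom a ha b hb _ ⟨div_pos hs ht, div_le_one_of_le₀ hst ht.le⟩,
    smul_smul, mul_div_cancel₀ _ ht.ne']

include hhom in
theorem coneOp_smul {s : ℝ} (hs : 0 < s) {a b : V} (ha : a ∈ X) (hb : b ∈ X) :
    coneOp X o (s • a) (s • b) = s • o a b := by
  have h : ∃ t : ℝ, 0 < t ∧ t⁻¹ • s • a ∈ X ∧ t⁻¹ • s • b ∈ X :=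
    ⟨s, hs, by rwa [inv_smul_smul₀ hs.ne'], by rwa [inv_smul_smul₀ hs.ne']⟩
  rw [coneOp, dif_pos h]
  obtain ⟨ht, hta, htb⟩ := h.choose_spec
  exact smul_op_eq_of_smul_eq hhom ht hs hta htb ha hb (smul_inv_smul₀ ht.ne' _)
    (smul_inv_smul₀ ht.ne' _)

include hhom in
theorem coneOp_eq_of_mem {x y : V} (hx : x ∈ X) (hy : y ∈ X) : coneOp X o x y = o x y := by
  simpa using coneOp_smul hhom one_pos hx hy

include hX h0 hhom in
theorem coneOp_mem_hull (hoX : ∀ x ∈ X, ∀ y ∈ X, o x y ∈ X) {u v : V} (hu : u ∈ hull ℝ X)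
    (hv : v ∈ hull ℝ X) : coneOp X o u v ∈ hull ℝ X := by
  obtain ⟨s, hs, ⟨a, ha, rfl⟩, ⟨b, hb, rfl⟩, -⟩ := exists_mem_smul_set₃ hX h0 hu hv hv
  rw [coneOp_smul hhom hs ha hb]
  exact (hull ℝ X).smul_mem hs (subset_hull (hoX a ha b hb))

include hX h0 hhom in
theorem coneOp_self (hidem : ∀ x ∈ X, o x x = x) {u : V} (hu : u ∈ hull ℝ X) :
    coneOp X o u u = u := by
  obtain ⟨s, hs, ⟨a, ha, rfl⟩, -, -⟩ := exists_mem_smul_set₃ hX h0 hu hu hu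
  rw [coneOp_smul hhom hs ha ha, hidem a ha]

include hX h0 hhom in
theorem coneOp_comm (hcomm : ∀ x ∈ X, ∀ y ∈ X, o x y = o y x) {u v : V} (hu : u ∈ hull ℝ X)
    (hv : v ∈ hull ℝ X) : coneOp X o u v = coneOp X o v u := by
  obtain ⟨s, hs, ⟨a, ha, rfl⟩, ⟨b, hb, rfl⟩, -⟩ := exists_mem_smul_set₃ hX h0 hu hv hv
  rw [coneOp_smul hhom hs ha hb, coneOp_smul hhom hs hb ha, hcomm a ha b hb]

include hX h0 hhom in
theorem coneOp_assoc (hoX : ∀ x ∈ X, ∀ y ∈ X, o x y ∈ X)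
    (hassoc : ∀ x ∈ X, ∀ y ∈ X, ∀ z ∈ X, o x (o y z) = o (o x y) z) {u v w : V}
    (hu : u ∈ hull ℝ X) (hv : v ∈ hull ℝ X) (hw : w ∈ hull ℝ X) :
    coneOp X o u (coneOp X o v w) = coneOp X o (coneOp X o u v) w := by
  obtain ⟨s, hs, ⟨a, ha, rfl⟩, ⟨b, hb, rfl⟩, ⟨c, hc, rfl⟩⟩ := exists_mem_smul_set₃ hX h0 hu hv hw
  rw [coneOp_smul hhom hs hb hc, coneOp_smul hhom hs ha (hoX b hb c hc),
    coneOp_smul hhom hs ha hb, coneOp_smul hhom hs (hoX a ha b hb) hc, hassoc a ha b hb c hc]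

include hX h0 hdist in
theorem coneOp_dist {u v w : V} (hu : u ∈ hull ℝ X) (hv : v ∈ hull ℝ X) (hw : w ∈ hull ℝ X)
    {p : ℝ} (hp : p ∈ Set.Ioo (0 : ℝ) 1) :
    p • coneOp X o u v + (1 - p) • w
      = coneOp X o (p • u + (1 - p) • w) (p • v + (1 - p) • w) := by
  have hhom := op_smul_smul_of_dist h0 hdist
  obtain ⟨s, hs, ⟨a, ha, rfl⟩, ⟨b, hb, rfl⟩, ⟨c, hc, rfl⟩⟩ := exists_mem_smul_set₃ hX h0 hu hv hw
  have hcomb {x : V} (hx : x ∈ X) : p • x + (1 - p) • c ∈ X :=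
    hX hx hc hp.1.le (sub_nonneg.2 hp.2.le) (add_sub_cancel p 1)
  have hrescale (x : V) : p • s • x + (1 - p) • s • c = s • (p • x + (1 - p) • c) := by module
  rw [hrescale, hrescale, coneOp_smul hhom hs (hcomb ha) (hcomb hb), ← hdist a ha b hb c hc p hp,
    coneOp_smul hhom hs ha hb]
  module

include hX h0 hdist in
theorem coneOp_add_right {u v z : V} (hu : u ∈ hull ℝ X) (hv : v ∈ hull ℝ X)
    (hz : z ∈ hull ℝ X) : coneOp X o (u + z) (v + z) = coneOp X o u v + z := by
  have hhom := op_smul_smul_of_dist h0 hdist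
  obtain ⟨s, hs, ⟨a, ha, rfl⟩, ⟨b, hb, rfl⟩, ⟨c, hc, rfl⟩⟩ := exists_mem_smul_set₃ hX h0 hu hv hz
  have hhalf : (2⁻¹ : ℝ) ∈ Set.Ioo 0 1 := by norm_num
  have hmid {x : V} (hx : x ∈ X) : (2⁻¹ : ℝ) • x + (1 - 2⁻¹ : ℝ) • c ∈ X :=
    hX hx hc (by norm_num) (by norm_num) (by norm_num)
  have hsum (x : V) : s • x + s • c = (2 * s) • ((2⁻¹ : ℝ) • x + (1 - 2⁻¹ : ℝ) • c) := by module
  rw [hsum, hsum, coneOp_smul hhom (by positivity) (hmid ha) (hmid hb),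
    ← hdist a ha b hb c hc _ hhalf, coneOp_smul hhom hs ha hb]
  module

include hX h0 hdist in
theorem spanOp_eq {w₁ w₂ z : V} (hz : z ∈ hull ℝ X) (h₁ : w₁ + z ∈ hull ℝ X)
    (h₂ : w₂ + z ∈ hull ℝ X) : spanOp X o w₁ w₂ = coneOp X o (w₁ + z) (w₂ + z) - z := by
  have h : ∃ z ∈ hull ℝ X, w₁ + z ∈ hull ℝ X ∧ w₂ + z ∈ hull ℝ X := ⟨z, hz, h₁, h₂⟩
  rw [spanOp, dif_pos h]
  obtain ⟨hz', h₁', h₂'⟩ := h.choose_spec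
  rw [sub_eq_sub_iff_add_eq_add, ← coneOp_add_right hX h0 hdist h₁' h₂' hz,
    ← coneOp_add_right hX h0 hdist h₁ h₂ hz', add_right_comm w₁, add_right_comm w₂]

include hX h0 hdist in
theorem spanOp_add_eq {w₁ w₂ z : V} (hz : z ∈ hull ℝ X) (h₁ : w₁ + z ∈ hull ℝ X)
    (h₂ : w₂ + z ∈ hull ℝ X) : spanOp X o w₁ w₂ + z = coneOp X o (w₁ + z) (w₂ + z) := by
  rw [spanOp_eq hX h0 hdist hz h₁ h₂, sub_add_cancel]

include hX h0 hdist in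
theorem spanOp_mem_span (hoX : ∀ x ∈ X, ∀ y ∈ X, o x y ∈ X) {w₁ w₂ : V}
    (hw₁ : w₁ ∈ span ℝ X) (hw₂ : w₂ ∈ span ℝ X) : spanOp X o w₁ w₂ ∈ span ℝ X := by
  obtain ⟨z, hz, h₁, h₂, -⟩ := exists_add_mem_hull₃ h0 hw₁ hw₂ hw₂
  rw [spanOp_eq hX h0 hdist hz h₁ h₂]
  exact sub_mem (hull_subset_span (coneOp_mem_hull hX h0 (op_smul_smul_of_dist h0 hdist) hoX h₁ h₂))
    (hull_subset_span hz)

include hX h0 hdist in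
theorem spanOp_self (hidem : ∀ x ∈ X, o x x = x) {w : V} (hw : w ∈ span ℝ X) :
    spanOp X o w w = w := by
  obtain ⟨z, hz, h, -, -⟩ := exists_add_mem_hull₃ h0 hw hw hw
  rw [spanOp_eq hX h0 hdist hz h h, coneOp_self hX h0 (op_smul_smul_of_dist h0 hdist) hidem h,
    add_sub_cancel_right]

include hX h0 hdist in
theorem spanOp_comm (hcomm : ∀ x ∈ X, ∀ y ∈ X, o x y = o y x) {w₁ w₂ : V}
    (hw₁ : w₁ ∈ span ℝ X) (hw₂ : w₂ ∈ span ℝ X) : spanOp X o w₁ w₂ = spanOp X o w₂ w₁ := by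
  obtain ⟨z, hz, h₁, h₂, -⟩ := exists_add_mem_hull₃ h0 hw₁ hw₂ hw₂
  rw [spanOp_eq hX h0 hdist hz h₁ h₂, spanOp_eq hX h0 hdist hz h₂ h₁,
    coneOp_comm hX h0 (op_smul_smul_of_dist h0 hdist) hcomm h₁ h₂]

include hX h0 hdist in
theorem spanOp_assoc (hoX : ∀ x ∈ X, ∀ y ∈ X, o x y ∈ X)
    (hassoc : ∀ x ∈ X, ∀ y ∈ X, ∀ z ∈ X, o x (o y z) = o (o x y) z) {w₁ w₂ w₃ : V}
    (hw₁ : w₁ ∈ span ℝ X) (hw₂ : w₂ ∈ span ℝ X) (hw₃ : w₃ ∈ span ℝ X) :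
    spanOp X o w₁ (spanOp X o w₂ w₃) = spanOp X o (spanOp X o w₁ w₂) w₃ := by
  have hhom := op_smul_smul_of_dist h0 hdist
  obtain ⟨z, hz, h₁, h₂, h₃⟩ := exists_add_mem_hull₃ h0 hw₁ hw₂ hw₃
  have e₂₃ := spanOp_add_eq hX h0 hdist hz h₂ h₃
  have e₁₂ := spanOp_add_eq hX h0 hdist hz h₁ h₂
  have m₂₃ : spanOp X o w₂ w₃ + z ∈ hull ℝ X := e₂₃ ▸ coneOp_mem_hull hX h0 hhom hoX h₂ h₃
  have m₁₂ : spanOp X o w₁ w₂ + z ∈ hull ℝ X := e₁₂ ▸ coneOp_mem_hull hX h0 hhom hoX h₁ h₂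
  rw [spanOp_eq hX h0 hdist hz h₁ m₂₃, spanOp_eq hX h0 hdist hz m₁₂ h₃, e₂₃, e₁₂,
    coneOp_assoc hX h0 hhom hoX hassoc h₁ h₂ h₃]

include hX h0 hdist in
theorem spanOp_dist {w₁ w₂ w₃ : V} (hw₁ : w₁ ∈ span ℝ X) (hw₂ : w₂ ∈ span ℝ X)
    (hw₃ : w₃ ∈ span ℝ X) {p : ℝ} (hp : p ∈ Set.Ioo (0 : ℝ) 1) :
    p • spanOp X o w₁ w₂ + (1 - p) • w₃
      = spanOp X o (p • w₁ + (1 - p) • w₃) (p • w₂ + (1 - p) • w₃) := by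
  obtain ⟨z, hz, h₁, h₂, h₃⟩ := exists_add_mem_hull₃ h0 hw₁ hw₂ hw₃
  have hshift (w : V) : p • w + (1 - p) • w₃ + z = p • (w + z) + (1 - p) • (w₃ + z) := by module
  have hcomb {w : V} (h : w + z ∈ hull ℝ X) : p • w + (1 - p) • w₃ + z ∈ hull ℝ X := by
    rw [hshift]
    exact (hull ℝ X).convex h h₃ hp.1.le (sub_nonneg.2 hp.2.le) (add_sub_cancel p 1)
  rw [spanOp_eq hX h0 hdist hz h₁ h₂, spanOp_eq hX h0 hdist hz (hcomb h₁) (hcomb h₂), hshift,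
    hshift, ← coneOp_dist hX h0 hdist h₁ h₂ h₃ hp]
  module

include hX h0 hdist in
theorem spanOp_eq_of_mem {x y : V} (hx : x ∈ X) (hy : y ∈ X) : spanOp X o x y = o x y := by
  have hz : (0 : V) ∈ hull ℝ X := subset_hull h0
  have hx' : x + 0 ∈ hull ℝ X := by rw [add_zero]; exact subset_hull hx
  have hy' : y + 0 ∈ hull ℝ X := by rw [add_zero]; exact subset_hull hy
  rw [spanOp_eq hX h0 hdist hz hx' hy', add_zero, add_zero, sub_zero,
    coneOp_eq_of_mem (op_smul_smul_of_dist h0 hdist) hx hy]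

end Extension

end ConvexSemilatticeExtension

open ConvexSemilatticeExtension in
/-- A convex semilattice structure on a convex subset `X` of a real vector space
with `0 ∈ X` extends to a convex semilattice structure on a linear subspace
containing `X`. -/
theorem convex_semilattice_extends_to_subspace
    (V : Type*) [AddCommGroup V] [Module ℝ V] (X : Set V)
    (hX : ∀ x ∈ X, ∀ y ∈ X, ∀ p ∈ Set.Ioo (0 : ℝ) 1, p • x + (1 - p) • y ∈ X)
    (h0 : (0 : V) ∈ X)
    (o : V → V → V)
    (hoX : ∀ x ∈ X, ∀ y ∈ X, o x y ∈ X)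
    (hidem : ∀ x ∈ X, o x x = x)
    (hcomm : ∀ x ∈ X, ∀ y ∈ X, o x y = o y x)
    (hassoc : ∀ x ∈ X, ∀ y ∈ X, ∀ z ∈ X, o x (o y z) = o (o x y) z)
    (hdist : ∀ x ∈ X, ∀ y ∈ X, ∀ z ∈ X, ∀ p ∈ Set.Ioo (0 : ℝ) 1,
      p • o x y + (1 - p) • z = o (p • x + (1 - p) • z) (p • y + (1 - p) • z)) :
    ∃ (W : Submodule ℝ V) (b : V → V → V),
      X ⊆ (W : Set V) ∧
      (∀ x ∈ W, ∀ y ∈ W, b x y ∈ W) ∧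
      (∀ x ∈ W, b x x = x) ∧
      (∀ x ∈ W, ∀ y ∈ W, b x y = b y x) ∧
      (∀ x ∈ W, ∀ y ∈ W, ∀ z ∈ W, b x (b y z) = b (b x y) z) ∧
      (∀ x ∈ W, ∀ y ∈ W, ∀ z ∈ W, ∀ p ∈ Set.Ioo (0 : ℝ) 1,
        p • b x y + (1 - p) • z = b (p • x + (1 - p) • z) (p • y + (1 - p) • z)) ∧
      (∀ x ∈ X, ∀ y ∈ X, b x y = o x y) := by
  have hconv : Convex ℝ X := convex_iff_forall_pos.2 fun x hx y hy a b ha _ hab ↦ by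
    obtain rfl : b = 1 - a := by linarith
    exact hX x hx y hy a ⟨ha, by linarith⟩
  exact ⟨Submodule.span ℝ X, spanOp X o, Submodule.subset_span,
    fun _ hx _ hy ↦ spanOp_mem_span hconv h0 hdist hoX hx hy,
    fun _ hx ↦ spanOp_self hconv h0 hdist hidem hx,
    fun _ hx _ hy ↦ spanOp_comm hconv h0 hdist hcomm hx hy,
    fun _ hx _ hy _ hz ↦ spanOp_assoc hconv h0 hdist hoX hassoc hx hy hz,
    fun _ hx _ hy _ hz _ hp ↦ spanOp_dist hconv h0 hdist hx hy hz hp,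
    fun _ hx _ hy ↦ spanOp_eq_of_mem hconv h0 hdist hx hy⟩
end
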